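/- Every subgroup of the multiplicative semigroup of n×n matrices over the tropical semiring admits a faithful representation by monomial tropical n×n matrices; that is, for every subgroup 𝒢 of (𝕋^{n×n}, ⊗) there exists an injective map ψ from 𝒢 into 𝕋^{n×n} such that ψ(G ⊗ H) = ψ(G) ⊗ ψ(H) for all G, H ∈ 𝒢 and ψ(G) is a monomial matrix for every G ∈ 𝒢. -/

import Mathlib

/-- The tropical (max-plus) semiring carrier: `ℝ ∪ {-∞}`, with `⊥` playing the
role of `-∞`. -/
abbrev Trop : Type := WithBot ℝ

/-- Tropical matrix multiplication: `(A ⊗ B) i j = max_k (A i k + B k j)`. -/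
def tropMulMat {n m p : ℕ} (A : Matrix (Fin n) (Fin m) Trop)
    (B : Matrix (Fin m) (Fin p) Trop) : Matrix (Fin n) (Fin p) Trop :=
  fun i j => Finset.univ.sup fun k => A i k + B k j

/-- A tropical square matrix is monomial if there is a permutation `σ` with
`P i j ≠ -∞ ↔ i = σ j`. -/
def IsMonomial {n : ℕ} (P : Matrix (Fin n) (Fin n) Trop) : Prop :=
  ∃ σ : Equiv.Perm (Fin n), ∀ i j, P i j ≠ ⊥ ↔ i = σ j

/-- A subset of the semigroup of tropical `n×n` matrices which is closed under
tropical matrix multiplication and forms a group under it. -/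
def IsMatSubgroup {n : ℕ} (S : Set (Matrix (Fin n) (Fin n) Trop)) : Prop :=
  (∀ A ∈ S, ∀ B ∈ S, tropMulMat A B ∈ S) ∧
  ∃ E ∈ S, (∀ A ∈ S, tropMulMat E A = A ∧ tropMulMat A E = A) ∧
    ∀ A ∈ S, ∃ B ∈ S, tropMulMat A B = E ∧ tropMulMat B A = E

/-!
The identity `E` of the group is a tropical idempotent, so `E i i ≤ 0`, and on the indices with
`E i i = 0` the relation `E i j + E j i = 0` is an equivalence. For `A` in the group and such an `i`,
row `i` of `A` is a finite multiple `A i k` of row `k` of `E`, for a pivot `k` unique up to this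
equivalence. On class representatives, `i ↦ k` is a permutation that composes along products, so
keeping only the pivot entries of the representative rows (and `0` on the diagonal elsewhere) gives
a multiplicative map into monomial matrices. It is injective because each finite entry of an
idempotent factors through some `p` with `E p p = 0`, so the rows of `A = E ⊗ A` are determined by
those rows, which are shifts of representative rows.
-/

open Finset

variable {n : ℕ}

namespace WithBot

variable {α : Type*} [AddMonoid α]

lemma eq_zero_of_add_eq_self [IsLeftCancelAdd α] {a b : WithBot α} (ha : a ≠ ⊥)
    (h : a + b = a) : b = 0 :=
  WithBot.add_left_cancel ha (h.trans (add_zero a).symm)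

lemma nonpos_of_add_self_le [Preorder α] [AddLeftMono α] [AddLeftReflectLE α] {a : WithBot α}
    (h : a + a ≤ a) : a ≤ 0 := by
  rcases eq_or_ne a ⊥ with rfl | ha
  · exact bot_le
  · exact (WithBot.add_le_add_iff_left ha).1 (h.trans (add_zero a).ge)

end WithBot

section TropicalMatrix

variable {m p : ℕ}

lemma le_tropMulMat (A : Matrix (Fin n) (Fin m) Trop) (B : Matrix (Fin m) (Fin p) Trop)
    (i : Fin n) (k : Fin m) (j : Fin p) : A i k + B k j ≤ tropMulMat A B i j :=
  le_sup (f := fun k => A i k + B k j) (mem_univ k)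

lemma add_le_of_tropMulMat_eq {A : Matrix (Fin n) (Fin m) Trop} {B : Matrix (Fin m) (Fin p) Trop}
    {C : Matrix (Fin n) (Fin p) Trop} (h : tropMulMat A B = C) (i : Fin n) (k : Fin m)
    (j : Fin p) : A i k + B k j ≤ C i j :=
  h ▸ le_tropMulMat A B i k j

lemma tropMulMat_le_iff {A : Matrix (Fin n) (Fin m) Trop} {B : Matrix (Fin m) (Fin p) Trop}
    {i : Fin n} {j : Fin p} {x : Trop} : tropMulMat A B i j ≤ x ↔ ∀ k, A i k + B k j ≤ x := by
  simp [tropMulMat, Finset.sup_le_iff]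

lemma exists_tropMulMat_eq [NeZero m] (A : Matrix (Fin n) (Fin m) Trop)
    (B : Matrix (Fin m) (Fin p) Trop) (i : Fin n) (j : Fin p) :
    ∃ k, tropMulMat A B i j = A i k + B k j := by
  obtain ⟨k, -, hk⟩ := exists_mem_eq_sup univ univ_nonempty fun k => A i k + B k j
  exact ⟨k, hk⟩

end TropicalMatrix

section Monomial

def monomialMat (f : Fin n → Fin n) (v : Fin n → Trop) : Matrix (Fin n) (Fin n) Trop :=
  fun i j => if j = f i then v i else ⊥

lemma tropMulMat_monomialMat (f g : Fin n → Fin n) (v w : Fin n → Trop) :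
    tropMulMat (monomialMat f v) (monomialMat g w) =
      monomialMat (g ∘ f) fun i => v i + w (f i) := by
  funext i j
  refine le_antisymm (tropMulMat_le_iff.2 fun k => ?_) ?_
  · by_cases hk : k = f i
    · subst hk
      by_cases hj : j = g (f i) <;> simp [monomialMat, hj]
    · simp [monomialMat, hk]
  · have := le_tropMulMat (monomialMat f v) (monomialMat g w) i (f i) j
    by_cases hj : j = g (f i) <;> simp_all [monomialMat]

lemma isMonomial_monomialMat (σ : Equiv.Perm (Fin n)) {v : Fin n → Trop} (hv : ∀ i, v i ≠ ⊥) :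
    IsMonomial (monomialMat σ v) := by
  refine ⟨σ.symm, fun i j => ?_⟩
  rw [Equiv.eq_symm_apply, eq_comm]
  by_cases hj : j = σ i <;> simp [monomialMat, hj, hv]

lemma monomialMat_injective {f g : Fin n → Fin n} {v w : Fin n → Trop} (hv : ∀ i, v i ≠ ⊥)
    (h : monomialMat f v = monomialMat g w) : f = g ∧ v = w := by
  have hi : ∀ i, v i = if f i = g i then w i else ⊥ := fun i => by
    simpa [monomialMat] using congr_fun (congr_fun h i) (f i)
  have hfg : f = g := funext fun i => by
    by_contra hne
    exact hv i (by simpa [hne] using hi i)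
  exact ⟨hfg, funext fun i => by simpa [hfg] using hi i⟩

end Monomial

def IsTropIdempotent (E : Matrix (Fin n) (Fin n) Trop) : Prop :=
  tropMulMat E E = E

def Linked (E : Matrix (Fin n) (Fin n) Trop) (i j : Fin n) : Prop :=
  E i j + E j i = 0

lemma Linked.symm {E : Matrix (Fin n) (Fin n) Trop} {i j : Fin n} (h : Linked E i j) :
    Linked E j i := by
  rwa [Linked, add_comm]

lemma linked_self {E : Matrix (Fin n) (Fin n) Trop} {i : Fin n} (h : E i i = 0) :
    Linked E i i := by
  rw [Linked, h, add_zero]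

lemma Linked.ne_bot {E : Matrix (Fin n) (Fin n) Trop} {i j : Fin n} (h : Linked E i j) :
    E i j ≠ ⊥ := by
  intro hb
  simp [Linked, hb] at h

lemma Linked.row_eq {E A : Matrix (Fin n) (Fin n) Trop} (hEA : tropMulMat E A = A)
    {i j : Fin n} (h : Linked E i j) (q : Fin n) : A i q = E i j + A j q := by
  refine le_antisymm ?_ (add_le_of_tropMulMat_eq hEA i j q)
  calc A i q = E i j + (E j i + A i q) := by rw [← add_assoc, h, zero_add]
    _ ≤ E i j + A j q := by gcongr; exact add_le_of_tropMulMat_eq hEA j i q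

namespace IsTropIdempotent

variable {E : Matrix (Fin n) (Fin n) Trop} (hE : IsTropIdempotent E)
include hE

lemma add_le (i k j : Fin n) : E i k + E k j ≤ E i j :=
  add_le_of_tropMulMat_eq hE i k j

lemma diag_nonpos (i : Fin n) : E i i ≤ 0 :=
  WithBot.nonpos_of_add_self_le (hE.add_le i i i)

lemma diag_eq_zero_of_linked {i j : Fin n} (h : Linked E i j) : E i i = 0 :=
  le_antisymm (hE.diag_nonpos i) (h ▸ hE.add_le i j i)

lemma linked_trans {i j k : Fin n} (hij : Linked E i j) (hjk : Linked E j k) :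
    Linked E i k := by
  refine le_antisymm ((hE.add_le i k i).trans (hE.diag_nonpos i)) ?_
  rw [Linked] at hij hjk
  calc (0 : Trop) = (E i j + E j i) + (E j k + E k j) := by rw [hij, hjk, add_zero]
    _ = (E i j + E j k) + (E k j + E j i) := by abel
    _ ≤ E i k + E k i := add_le_add (hE.add_le i j k) (hE.add_le k j i)

/-- Iterating a maximizing choice in `E = E ⊗ E` must cycle, and the cycle through `p` forces
`E p p = 0`. -/
lemma exists_diag_zero_factor {i j : Fin n} (hij : E i j ≠ ⊥) :
    ∃ p, E p p = 0 ∧ E i p + E p j = E i j := by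
  have : NeZero n := NeZero.of_pos i.pos
  choose s hs using fun q => exists_tropMulMat_eq E E i q
  rw [hE] at hs
  have hiter : ∀ m q, E i (s^[m + 1] q) + E (s^[m + 1] q) q = E i q := by
    intro m
    induction m with
    | zero => exact fun q => (hs q).symm
    | succ m ih =>
      intro q
      refine le_antisymm (hE.add_le _ _ _) ?_
      rw [Function.iterate_succ_apply]
      calc E i q = E i (s^[m + 1] (s q)) + E (s^[m + 1] (s q)) (s q) + E (s q) q := by
            rw [ih, hs]
        _ ≤ E i (s^[m + 1] (s q)) + E (s^[m + 1] (s q)) q := by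
            rw [add_assoc]; gcongr; exact hE.add_le _ _ _
  obtain ⟨a, b, hab, hcycle⟩ := Finite.exists_ne_map_eq_of_infinite fun m => s^[m + 1] j
  wlog hlt : a < b generalizing a b
  · exact this b a hab.symm hcycle.symm (hab.lt_or_gt.resolve_left hlt)
  obtain ⟨d, rfl⟩ := Nat.exists_eq_add_of_lt hlt
  set p := s^[a + 1] j
  have hperiodic : s^[d + 1] p = p := by
    rw [← Function.iterate_add_apply, hcycle]; congr 1; omega
  have hip : E i p ≠ ⊥ := fun h => hij (by rw [← hiter a j, h, WithBot.bot_add])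
  refine ⟨p, WithBot.eq_zero_of_add_eq_self hip ?_, hiter a j⟩
  simpa only [hperiodic] using hiter d p

lemma le_of_rows_eq {A C : Matrix (Fin n) (Fin n) Trop} (hEA : tropMulMat E A = A)
    (hEC : tropMulMat E C = C) (hrows : ∀ p, E p p = 0 → A p = C p) (i j : Fin n) :
    A i j ≤ C i j := by
  rw [← hEA]
  refine tropMulMat_le_iff.2 fun k => ?_
  rcases eq_or_ne (E i k) ⊥ with hik | hik
  · simp [hik]
  obtain ⟨p, hp, hfactor⟩ := hE.exists_diag_zero_factor hik
  calc E i k + A k j = E i p + (E p k + A k j) := by rw [← add_assoc, hfactor]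
    _ ≤ E i p + A p j := by gcongr; exact add_le_of_tropMulMat_eq hEA p k j
    _ = E i p + C p j := by rw [hrows p hp]
    _ ≤ C i j := add_le_of_tropMulMat_eq hEC i p j

lemma eq_of_rows_eq {A C : Matrix (Fin n) (Fin n) Trop} (hEA : tropMulMat E A = A)
    (hEC : tropMulMat E C = C) (hrows : ∀ p, E p p = 0 → A p = C p) : A = C :=
  funext fun i => funext fun j => le_antisymm (hE.le_of_rows_eq hEA hEC hrows i j)
    (hE.le_of_rows_eq hEC hEA (fun p hp => (hrows p hp).symm) i j)

end IsTropIdempotent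

section Pivots

variable {E A C : Matrix (Fin n) (Fin n) Trop}

/-- Meaningful only when `E i i = 0`; otherwise `Linked E i` is empty and this is arbitrary. -/
noncomputable def linkedRep (E : Matrix (Fin n) (Fin n) Trop) (i : Fin n) : Fin n :=
  @Classical.epsilon _ ⟨i⟩ (Linked E i)

def IsLinkedRep (E : Matrix (Fin n) (Fin n) Trop) (i : Fin n) : Prop :=
  E i i = 0 ∧ linkedRep E i = i

lemma linked_linkedRep {i : Fin n} (hi : E i i = 0) : Linked E i (linkedRep E i) :=
  Classical.epsilon_spec ⟨i, linked_self hi⟩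

lemma IsTropIdempotent.linkedRep_eq (hE : IsTropIdempotent E) {i j : Fin n}
    (h : Linked E i j) : linkedRep E i = linkedRep E j := by
  have : Linked E i = Linked E j :=
    funext fun k => propext ⟨hE.linked_trans h.symm, hE.linked_trans h⟩
  unfold linkedRep
  congr

lemma IsTropIdempotent.isLinkedRep_linkedRep (hE : IsTropIdempotent E) {i : Fin n}
    (hi : E i i = 0) : IsLinkedRep E (linkedRep E i) := by
  have h := linked_linkedRep hi
  exact ⟨hE.diag_eq_zero_of_linked h.symm, hE.linkedRep_eq h.symm⟩

def IsPivot (E A : Matrix (Fin n) (Fin n) Trop) (i k : Fin n) : Prop :=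
  A i k ≠ ⊥ ∧ ∀ q, A i q = A i k + E k q

def HasPivots (E A : Matrix (Fin n) (Fin n) Trop) : Prop :=
  ∀ i, E i i = 0 → ∃ k, IsPivot E A i k

lemma isPivot_self {i : Fin n} (hi : E i i = 0) : IsPivot E E i i :=
  ⟨by simp [hi], fun q => by rw [hi, zero_add]⟩

lemma IsPivot.diag_eq_zero {i k : Fin n} (hk : IsPivot E A i k) : E k k = 0 :=
  WithBot.eq_zero_of_add_eq_self hk.1 (hk.2 k).symm

lemma IsPivot.linked {i k l : Fin n} (hk : IsPivot E A i k) (hl : IsPivot E A i l) :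
    Linked E k l :=
  WithBot.eq_zero_of_add_eq_self hk.1 <| by rw [← add_assoc, ← hk.2 l, ← hl.2 k]

lemma IsPivot.of_linked (hE : IsTropIdempotent E) {i k l : Fin n} (hk : IsPivot E A i k)
    (hkl : Linked E k l) : IsPivot E A i l := by
  have hil : A i l = A i k + E k l := hk.2 l
  refine ⟨?_, fun q => ?_⟩
  · rw [hil]
    exact WithBot.add_ne_bot.2 ⟨hk.1, hkl.ne_bot⟩
  · rw [hk.2 q, hil, add_assoc, ← hkl.row_eq hE q]

lemma IsPivot.tropMulMat_apply {i k : Fin n} (hk : IsPivot E A i k)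
    (hEC : tropMulMat E C = C) (q : Fin n) : tropMulMat A C i q = A i k + C k q := by
  refine le_antisymm (tropMulMat_le_iff.2 fun m => ?_) (le_tropMulMat A C i k q)
  calc A i m + C m q = A i k + (E k m + C m q) := by rw [hk.2 m, add_assoc]
    _ ≤ A i k + C k q := by gcongr; exact add_le_of_tropMulMat_eq hEC k m q

lemma IsPivot.tropMulMat {i k l : Fin n} (hA : IsPivot E A i k) (hC : IsPivot E C k l)
    (hEC : tropMulMat E C = C) : IsPivot E (tropMulMat A C) i l := by
  refine ⟨?_, fun q => ?_⟩
  · rw [hA.tropMulMat_apply hEC]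
    exact WithBot.add_ne_bot.2 ⟨hA.1, hC.1⟩
  · rw [hA.tropMulMat_apply hEC, hA.tropMulMat_apply hEC, hC.2 q, add_assoc]

/-- The pivot of row `i` sits where the zero entry of `(A ⊗ B) i i = E i i` is attained. -/
lemma hasPivots_of_tropMulMat_eq {B : Matrix (Fin n) (Fin n) Trop}
    (hAE : tropMulMat A E = A) (hAB : tropMulMat A B = E) (hBA : tropMulMat B A = E) :
    HasPivots E A := by
  intro i hi
  have : NeZero n := NeZero.of_pos i.pos
  obtain ⟨k, hk⟩ := exists_tropMulMat_eq A B i i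
  rw [hAB, hi] at hk
  refine ⟨k, fun h => by simp [h] at hk, fun q => ?_⟩
  refine le_antisymm ?_ (add_le_of_tropMulMat_eq hAE i k q)
  calc A i q = A i k + (B k i + A i q) := by rw [← add_assoc, ← hk, zero_add]
    _ ≤ A i k + E k q := by gcongr; exact add_le_of_tropMulMat_eq hBA k i q

end Pivots

section PivotCol

variable {E A C : Matrix (Fin n) (Fin n) Trop}

/-- Passing to `linkedRep` makes the column independent of the chosen pivot, so that it composes
along products. -/
noncomputable def pivotCol (E A : Matrix (Fin n) (Fin n) Trop) (i : Fin n) : Fin n :=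
  open Classical in
  if IsLinkedRep E i then linkedRep E (@Classical.epsilon _ ⟨i⟩ (IsPivot E A i)) else i

lemma pivotCol_of_not_isLinkedRep {i : Fin n} (hi : ¬IsLinkedRep E i) : pivotCol E A i = i :=
  if_neg hi

variable (hE : IsTropIdempotent E)
include hE

lemma IsTropIdempotent.pivotCol_eq {i k : Fin n} (hi : IsLinkedRep E i) (hk : IsPivot E A i k) :
    pivotCol E A i = linkedRep E k := by
  rw [pivotCol, if_pos hi]
  exact hE.linkedRep_eq ((Classical.epsilon_spec ⟨k, hk⟩).linked hk)

lemma IsTropIdempotent.isPivot_pivotCol (hA : HasPivots E A) {i : Fin n} (hi : IsLinkedRep E i) :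
    IsPivot E A i (pivotCol E A i) := by
  obtain ⟨k, hk⟩ := hA i hi.1
  rw [hE.pivotCol_eq hi hk]
  exact hk.of_linked hE (linked_linkedRep hk.diag_eq_zero)

lemma IsTropIdempotent.isLinkedRep_pivotCol (hA : HasPivots E A) {i : Fin n}
    (hi : IsLinkedRep E i) : IsLinkedRep E (pivotCol E A i) := by
  obtain ⟨k, hk⟩ := hA i hi.1
  rw [hE.pivotCol_eq hi hk]
  exact hE.isLinkedRep_linkedRep hk.diag_eq_zero

lemma IsTropIdempotent.pivotCol_self : pivotCol E E = id := by
  funext i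
  by_cases hi : IsLinkedRep E i
  · rw [hE.pivotCol_eq hi (isPivot_self hi.1), hi.2, id]
  · exact pivotCol_of_not_isLinkedRep hi

lemma IsTropIdempotent.pivotCol_tropMulMat (hA : HasPivots E A) (hC : HasPivots E C)
    (hEC : tropMulMat E C = C) :
    pivotCol E (tropMulMat A C) = pivotCol E C ∘ pivotCol E A := by
  funext i
  by_cases hi : IsLinkedRep E i
  · have hk := hE.isLinkedRep_pivotCol hA hi
    have hAC := (hE.isPivot_pivotCol hA hi).tropMulMat (hE.isPivot_pivotCol hC hk) hEC
    rw [hE.pivotCol_eq hi hAC, (hE.isLinkedRep_pivotCol hC hk).2, Function.comp_apply]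
  · rw [Function.comp_apply, pivotCol_of_not_isLinkedRep hi, pivotCol_of_not_isLinkedRep hi,
      pivotCol_of_not_isLinkedRep hi]

lemma IsTropIdempotent.leftInverse_pivotCol {B : Matrix (Fin n) (Fin n) Trop}
    (hA : HasPivots E A) (hB : HasPivots E B) (hEB : tropMulMat E B = B)
    (hAB : tropMulMat A B = E) : Function.LeftInverse (pivotCol E B) (pivotCol E A) := by
  intro i
  rw [← Function.comp_apply (f := pivotCol E B), ← hE.pivotCol_tropMulMat hA hB hEB, hAB,
    hE.pivotCol_self, id]

end PivotCol

section MonomialRep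

variable {E A C : Matrix (Fin n) (Fin n) Trop}

noncomputable def pivotVal (E A : Matrix (Fin n) (Fin n) Trop) (i : Fin n) : Trop :=
  open Classical in
  if IsLinkedRep E i then A i (pivotCol E A i) else 0

noncomputable def monomialRep (E A : Matrix (Fin n) (Fin n) Trop) : Matrix (Fin n) (Fin n) Trop :=
  monomialMat (pivotCol E A) (pivotVal E A)

variable (hE : IsTropIdempotent E)
include hE

lemma IsTropIdempotent.pivotVal_ne_bot (hA : HasPivots E A) (i : Fin n) : pivotVal E A i ≠ ⊥ := by
  by_cases hi : IsLinkedRep E i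
  · rw [pivotVal, if_pos hi]
    exact (hE.isPivot_pivotCol hA hi).1
  · simp [pivotVal, hi]

lemma IsTropIdempotent.row_eq_pivotVal_add (hA : HasPivots E A) {i : Fin n}
    (hi : IsLinkedRep E i) (q : Fin n) : A i q = pivotVal E A i + E (pivotCol E A i) q := by
  rw [pivotVal, if_pos hi]
  exact (hE.isPivot_pivotCol hA hi).2 q

lemma IsTropIdempotent.pivotVal_tropMulMat (hA : HasPivots E A) (hC : HasPivots E C)
    (hEC : tropMulMat E C = C) (i : Fin n) :
    pivotVal E (tropMulMat A C) i = pivotVal E A i + pivotVal E C (pivotCol E A i) := by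
  by_cases hi : IsLinkedRep E i
  · have hk := hE.isLinkedRep_pivotCol hA hi
    rw [pivotVal, pivotVal, pivotVal, if_pos hi, if_pos hi, if_pos hk,
      hE.pivotCol_tropMulMat hA hC hEC, Function.comp_apply,
      (hE.isPivot_pivotCol hA hi).tropMulMat_apply hEC]
  · simp [pivotVal, hi, pivotCol_of_not_isLinkedRep hi]

lemma IsTropIdempotent.monomialRep_tropMulMat (hA : HasPivots E A) (hC : HasPivots E C)
    (hEC : tropMulMat E C = C) :
    monomialRep E (tropMulMat A C) = tropMulMat (monomialRep E A) (monomialRep E C) := by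
  rw [monomialRep, monomialRep, monomialRep, tropMulMat_monomialMat,
    hE.pivotCol_tropMulMat hA hC hEC, funext (hE.pivotVal_tropMulMat hA hC hEC)]

lemma IsTropIdempotent.isMonomial_monomialRep {B : Matrix (Fin n) (Fin n) Trop}
    (hA : HasPivots E A) (hB : HasPivots E B) (hEA : tropMulMat E A = A)
    (hEB : tropMulMat E B = B) (hAB : tropMulMat A B = E) (hBA : tropMulMat B A = E) :
    IsMonomial (monomialRep E A) :=
  isMonomial_monomialMat ⟨pivotCol E A, pivotCol E B, hE.leftInverse_pivotCol hA hB hEB hAB,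
    hE.leftInverse_pivotCol hB hA hEA hBA⟩ (hE.pivotVal_ne_bot hA)

lemma IsTropIdempotent.eq_of_monomialRep_eq (hA : HasPivots E A) (hC : HasPivots E C)
    (hEA : tropMulMat E A = A) (hEC : tropMulMat E C = C)
    (h : monomialRep E A = monomialRep E C) : A = C := by
  obtain ⟨hcol, hval⟩ := monomialMat_injective (hE.pivotVal_ne_bot hA) h
  refine hE.eq_of_rows_eq hEA hEC fun p hp => funext fun q => ?_
  have hrep := linked_linkedRep hp
  have hrepRep := hE.isLinkedRep_linkedRep hp
  rw [hrep.row_eq hEA, hrep.row_eq hEC, hE.row_eq_pivotVal_add hA hrepRep,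
    hE.row_eq_pivotVal_add hC hrepRep, hcol, hval]

end MonomialRep

theorem monomial_faithful_rep {n : ℕ}
    (S : Set (Matrix (Fin n) (Fin n) Trop)) (hS : IsMatSubgroup S) :
    ∃ ψ : Matrix (Fin n) (Fin n) Trop → Matrix (Fin n) (Fin n) Trop,
      Set.InjOn ψ S ∧
      (∀ G ∈ S, ∀ H ∈ S, ψ (tropMulMat G H) = tropMulMat (ψ G) (ψ H)) ∧
      ∀ G ∈ S, IsMonomial (ψ G) := by
  obtain ⟨-, E, hES, hone, hinv⟩ := hS
  have hE : IsTropIdempotent E := (hone E hES).1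
  have hpiv : ∀ A ∈ S, HasPivots E A := fun A hA => by
    obtain ⟨B, -, hAB, hBA⟩ := hinv A hA
    exact hasPivots_of_tropMulMat_eq (hone A hA).2 hAB hBA
  refine ⟨monomialRep E, fun A hA C hC h => ?_, fun A hA C hC => ?_, fun A hA => ?_⟩
  · exact hE.eq_of_monomialRep_eq (hpiv A hA) (hpiv C hC) (hone A hA).1 (hone C hC).1 h
  · exact hE.monomialRep_tropMulMat (hpiv A hA) (hpiv C hC) (hone C hC).1
  · obtain ⟨B, hB, hAB, hBA⟩ := hinv A hA
    exact hE.isMonomial_monomialRep (hpiv A hA) (hpiv B hB) (hone A hA).1 (hone B hB).1 hAB hBA
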